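/- Let V = ℚ⁴, identified with its dual via the standard inner product, and let Φ = {±e_i ± e_j : 1 ≤ i < j ≤ 4} ∪ {±e_i : 1 ≤ i ≤ 4} ∪ {(±e₁ ± e₂ ± e₃ ± e₄)/2} with coroots α∨ = 2α/(α,α) (so the coroots are {±e_i ± e_j}, {±2e_i}, and {±e₁ ± e₂ ± e₃ ± e₄}). This is a root system of type F₄. Then no nonzero element of the weight lattice P is quasi-constant. -/

import Mathlib

namespace QC

open Classical

variable {V : Type*} [AddCommGroup V] [Module ℚ V]

/-- The contragredient action of a linear automorphism `w` of `V` on the dual space,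
characterized by `⟨w x, coact w f⟩ = ⟨x, f⟩`, i.e. `(coact w f) x = f (w⁻¹ x)`. -/
noncomputable def coact (w : V ≃ₗ[ℚ] V) (f : Module.Dual ℚ V) : Module.Dual ℚ V :=
  w.symm.dualMap f

/-- The Weyl group of the data `(Φ, co)`: the subgroup of linear automorphisms of `V`
generated by the reflections `s_α : x ↦ x - ⟨x, α∨⟩ α` for `α ∈ Φ`. -/
def weylGroup (Φ : Set V) (co : V → Module.Dual ℚ V) : Subgroup (V ≃ₗ[ℚ] V) :=
  Subgroup.closure { w : V ≃ₗ[ℚ] V | ∃ α ∈ Φ, ∀ x : V, w x = x - (co α x) • α }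

/-- `χ ∈ V` is quasi-constant with respect to a group `G` of automorphisms
(typically the Weyl group, or `W ⋊ Γ`). -/
def IsQuasiConstantWrt (Φ : Set V) (co : V → Module.Dual ℚ V)
    (G : Subgroup (V ≃ₗ[ℚ] V)) (χ : V) : Prop :=
  ∀ α ∈ Φ, co α χ ≠ 0 → ∀ σ, σ ∈ G → coact σ (co α) χ / co α χ ∈ ({-1, 0, 1} : Set ℚ)

/-- `χ ∈ V` is quasi-constant (with respect to the Weyl group). -/
def IsQuasiConstant (Φ : Set V) (co : V → Module.Dual ℚ V) (χ : V) : Prop :=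
  IsQuasiConstantWrt Φ co (weylGroup Φ co) χ

/-- A coweight `μ ∈ V∨` is quasi-constant with respect to a group `G`. -/
def IsQuasiConstantCowtWrt (Φ : Set V) (G : Subgroup (V ≃ₗ[ℚ] V))
    (μ : Module.Dual ℚ V) : Prop :=
  ∀ α ∈ Φ, μ α ≠ 0 → ∀ σ, σ ∈ G → μ (σ α) / μ α ∈ ({-1, 0, 1} : Set ℚ)

/-- A coweight `μ ∈ V∨` is quasi-constant (with respect to the Weyl group). -/
def IsQuasiConstantCowt (Φ : Set V) (co : V → Module.Dual ℚ V)
    (μ : Module.Dual ℚ V) : Prop :=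
  IsQuasiConstantCowtWrt Φ (weylGroup Φ co) μ

/-- `χ ∈ V` is minuscule: `⟨χ, α∨⟩ ∈ {-1,0,1}` for all roots `α`. -/
def IsMinuscule (Φ : Set V) (co : V → Module.Dual ℚ V) (χ : V) : Prop :=
  ∀ α ∈ Φ, co α χ ∈ ({-1, 0, 1} : Set ℚ)

/-- `μ ∈ V∨` is minuscule: `⟨α, μ⟩ ∈ {-1,0,1}` for all roots `α`. -/
def IsMinusculeCowt (Φ : Set V) (μ : Module.Dual ℚ V) : Prop :=
  ∀ α ∈ Φ, μ α ∈ ({-1, 0, 1} : Set ℚ)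

/-- The weight lattice `P = {χ ∈ V : ⟨χ, β∨⟩ ∈ ℤ for all β ∈ Φ}`. -/
def weightLattice (Φ : Set V) (co : V → Module.Dual ℚ V) : Set V :=
  { χ | ∀ β ∈ Φ, ∃ n : ℤ, co β χ = (n : ℚ) }

/-- The coweight lattice `P∨ = {μ ∈ V∨ : ⟨α, μ⟩ ∈ ℤ for all α ∈ Φ}`. -/
def coweightLattice (Φ : Set V) : Set (Module.Dual ℚ V) :=
  { μ | ∀ α ∈ Φ, ∃ n : ℤ, μ α = (n : ℚ) }

/-- `(Φ, co)` is a reduced root system (not necessarily spanning) in `V`, where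
`co α` is the coroot `α∨` viewed as a linear functional, with the Weyl group acting
compatibly on roots and coroots. -/
structure IsRootSystem (Φ : Set V) (co : V → Module.Dual ℚ V) : Prop where
  finite : Φ.Finite
  ne_zero : ∀ α ∈ Φ, α ≠ 0
  pair_self : ∀ α ∈ Φ, co α α = 2
  refl_mem : ∀ α ∈ Φ, ∀ β ∈ Φ, β - (co α β) • α ∈ Φ
  pair_int : ∀ α ∈ Φ, ∀ β ∈ Φ, ∃ n : ℤ, co α β = (n : ℚ)
  reduced : ∀ α ∈ Φ, ∀ c : ℚ, c • α ∈ Φ → c = 1 ∨ c = -1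
  weyl_root : ∀ w, w ∈ weylGroup Φ co → ∀ α ∈ Φ, w α ∈ Φ
  weyl_coroot : ∀ w, w ∈ weylGroup Φ co → ∀ α ∈ Φ, co (w α) = coact w (co α)

/-- `Φ` is irreducible: it is nonempty and admits no nontrivial orthogonal decomposition. -/
def IsIrreducible (Φ : Set V) (co : V → Module.Dual ℚ V) : Prop :=
  Φ.Nonempty ∧ ∀ Ψ ⊆ Φ, (∀ α ∈ Ψ, ∀ β ∈ Φ \ Ψ, co α β = 0) → Ψ = ∅ ∨ Ψ = Φ

/-- `Δ` is a base (set of simple roots) of `Φ`. -/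
structure IsBase (Φ : Set V) (co : V → Module.Dual ℚ V) (Δ : Set V) : Prop where
  subset : Δ ⊆ Φ
  indep : LinearIndependent ℚ ((↑) : Δ → V)
  span_eq : Submodule.span ℚ Δ = Submodule.span ℚ Φ
  decomp : ∀ α ∈ Φ, ∃ c : V →₀ ℕ, ↑c.support ⊆ Δ ∧
      (α = c.sum (fun v n => (n : ℚ) • v) ∨ α = - c.sum (fun v n => (n : ℚ) • v))

/-- `η` is the fundamental weight `η(α)` for the simple root `α ∈ Δ`:
`⟨η, β∨⟩ = δ_{αβ}` for `β ∈ Δ`. -/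
def IsFundWeight (co : V → Module.Dual ℚ V) (Δ : Set V) (α : V) (η : V) : Prop :=
  ∀ β ∈ Δ, co β η = if β = α then 1 else 0

/-- `f` is the fundamental coweight `η(α∨)` for the simple root `α ∈ Δ`:
`⟨β, f⟩ = δ_{αβ}` for `β ∈ Δ`. -/
def IsFundCoweight (Δ : Set V) (α : V) (f : Module.Dual ℚ V) : Prop :=
  ∀ β ∈ Δ, f β = if β = α then 1 else 0

/-- `χ` is cominuscule: `χ = η(α)` for some base `Δ` and `α ∈ Δ` such that the
fundamental coweight `η(α∨)` is minuscule. -/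
def IsCominuscule (Φ : Set V) (co : V → Module.Dual ℚ V) (χ : V) : Prop :=
  χ ∈ Submodule.span ℚ Φ ∧
  ∃ Δ : Set V, IsBase Φ co Δ ∧ ∃ α ∈ Δ, IsFundWeight co Δ α χ ∧
    ∀ f : Module.Dual ℚ V, IsFundCoweight Δ α f → IsMinusculeCowt Φ f

/-- `μ` is a cominuscule coweight: `μ = η(α∨)` for some base `Δ` and `α ∈ Δ` such that
the fundamental weight `η(α)` is minuscule. -/
def IsCominusculeCowt (Φ : Set V) (co : V → Module.Dual ℚ V)
    (μ : Module.Dual ℚ V) : Prop :=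
  ∃ Δ : Set V, IsBase Φ co Δ ∧ ∃ α ∈ Δ, IsFundCoweight Δ α μ ∧
    ∀ η : V, IsFundWeight co Δ α η → IsMinuscule Φ co η

/-- `χ` is `Δ`-dominant. -/
def IsDominant (co : V → Module.Dual ℚ V) (Δ : Set V) (χ : V) : Prop :=
  ∀ α ∈ Δ, 0 ≤ co α χ

/-- `μ ∈ V∨` is `Δ`-dominant. -/
def IsDominantCowt (Δ : Set V) (μ : Module.Dual ℚ V) : Prop :=
  ∀ α ∈ Δ, 0 ≤ μ α

/-- `χ` is orbitally `p`-close. -/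
def IsOrbitallyPClose (Φ : Set V) (co : V → Module.Dual ℚ V) (p : ℕ) (χ : V) : Prop :=
  ∀ α ∈ Φ, co α χ ≠ 0 → ∀ w, w ∈ weylGroup Φ co →
    |coact w (co α) χ / co α χ| ≤ (p : ℚ) - 1

end QC

namespace QC

/-- The linear functional `y ↦ ∑ i, x i * y i` given by the standard inner product. -/
noncomputable def dotF (n : ℕ) (x : Fin n → ℚ) : Module.Dual ℚ (Fin n → ℚ) :=
  ∑ i, x i • LinearMap.proj i

/-- The coroot `α∨ = 2α/(α,α)` of `α`, as a linear functional via the standard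
inner product. -/
noncomputable def stdCoroot (n : ℕ) (α : Fin n → ℚ) : Module.Dual ℚ (Fin n → ℚ) :=
  (2 / dotF n α α) • dotF n α

/-- The `i`-th standard basis vector `eᵢ` of `ℚⁿ`. -/
def eVec (n : ℕ) (i : Fin n) : Fin n → ℚ := Pi.single i 1

end QC

namespace QC

/-- The roots `±eᵢ ± eⱼ` (`i ≠ j`). -/
def o1 (n : ℕ) : Set (Fin n → ℚ) :=
  {v | ∃ i j : Fin n, i ≠ j ∧ ∃ s t : ℚ, (s = 1 ∨ s = -1) ∧ (t = 1 ∨ t = -1) ∧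
      v = s • eVec _ i + t • eVec _ j}

/-- The roots `±eᵢ`. -/
def oShort (n : ℕ) : Set (Fin n → ℚ) :=
  {v | ∃ i : Fin n, v = eVec _ i ∨ v = -eVec _ i}

/-- The root system of type `F₄` in `ℚ⁴`:
`{±eᵢ ± eⱼ} ∪ {±eᵢ} ∪ {(±e₁ ± e₂ ± e₃ ± e₄)/2}`. -/
def f4Φ : Set (Fin 4 → ℚ) :=
  o1 4 ∪ oShort 4 ∪ {v | ∀ i, v i = 1/2 ∨ v i = -(1/2)}

end QC


namespace QC

lemma dotF_apply (n : ℕ) (x y : Fin n → ℚ) : dotF n x y = ∑ i, x i * y i := by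
  simp [dotF]

lemma stdCoroot_apply (n : ℕ) (α x : Fin n → ℚ) :
    stdCoroot n α x = (2 / ∑ i, α i * α i) * ∑ i, α i * x i := by
  simp [stdCoroot, dotF_apply, smul_eq_mul]

lemma coroot_e (i : Fin 4) (x : Fin 4 → ℚ) : stdCoroot 4 (eVec 4 i) x = 2 * x i := by
  simp [stdCoroot_apply, eVec, Pi.single_apply, ite_mul, Finset.sum_ite_eq']

lemma coroot_st {i j : Fin 4} (hij : i ≠ j) (s t : ℚ) (hs : s = 1 ∨ s = -1)
    (ht : t = 1 ∨ t = -1) (x : Fin 4 → ℚ) :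
    stdCoroot 4 (s • eVec 4 i + t • eVec 4 j) x = s * x i + t * x j := by
  have h1 : (∑ k, (s • eVec 4 i + t • eVec 4 j) k * (s • eVec 4 i + t • eVec 4 j) k) = 2 := by
    simp [eVec, Pi.single_apply, mul_ite, ite_mul, add_mul, mul_add,
      Finset.sum_add_distrib, Finset.sum_ite_eq', hij, hij.symm]
    rcases hs with h | h <;> rcases ht with h' | h' <;> simp [h, h'] <;> ring
  have h2 : (∑ k, (s • eVec 4 i + t • eVec 4 j) k * x k) = s * x i + t * x j := by
    simp [eVec, Pi.single_apply, ite_mul, add_mul, Finset.sum_add_distrib,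
      Finset.sum_ite_eq', hij, hij.symm]
  rw [stdCoroot_apply, h1, h2]; norm_num

lemma coroot_half (ε : Fin 4 → ℚ) (hε : ∀ k, ε k = 1 ∨ ε k = -1) (x : Fin 4 → ℚ) :
    stdCoroot 4 (fun k => ε k / 2) x = ∑ k, ε k * x k := by
  have h1 : (∑ k, (ε k / 2) * (ε k / 2)) = 1 := by
    have : ∀ k : Fin 4, (ε k / 2) * (ε k / 2) = 1/4 := by
      intro k; rcases hε k with h | h <;> rw [h] <;> norm_num
    simp [this]
  have h2 : (∑ k, (ε k / 2) * x k) = (∑ k, ε k * x k) / 2 := by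
    rw [Finset.sum_div]; congr 1; ext k; ring
  rw [stdCoroot_apply, h1, h2]; ring

/-- The reflection in `α`, as a linear map. -/
noncomputable def rfl4 (α : Fin 4 → ℚ) : (Fin 4 → ℚ) →ₗ[ℚ] (Fin 4 → ℚ) :=
  LinearMap.id - (stdCoroot 4 α).smulRight α

lemma rfl4_apply (α x : Fin 4 → ℚ) : rfl4 α x = x - stdCoroot 4 α x • α := rfl

lemma rfl4_coord (α x : Fin 4 → ℚ) (l : Fin 4) :
    rfl4 α x l = x l - stdCoroot 4 α x * α l := by
  simp [rfl4_apply]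

lemma rfl4_invol (α : Fin 4 → ℚ) (h2 : stdCoroot 4 α α = 2) :
    Function.Involutive (rfl4 α) := by
  intro x
  simp only [rfl4_apply, map_sub, map_smul, h2, smul_eq_mul, sub_smul, smul_smul]
  module

/-- The reflection in `α`, as a linear equivalence. -/
noncomputable def rflE (α : Fin 4 → ℚ) (h2 : stdCoroot 4 α α = 2) :
    (Fin 4 → ℚ) ≃ₗ[ℚ] (Fin 4 → ℚ) :=
  { rfl4 α with
    invFun := rfl4 α
    left_inv := rfl4_invol α h2
    right_inv := rfl4_invol α h2 }

lemma rflE_mem {α : Fin 4 → ℚ} (h2 : stdCoroot 4 α α = 2) (hα : α ∈ f4Φ) :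
    rflE α h2 ∈ weylGroup f4Φ (stdCoroot 4) :=
  Subgroup.subset_closure ⟨α, hα, fun _ => rfl⟩

lemma coact_rflE (α : Fin 4 → ℚ) (h2 : stdCoroot 4 α α = 2)
    (f : Module.Dual ℚ (Fin 4 → ℚ)) (x : Fin 4 → ℚ) :
    coact (rflE α h2) f x = f (rfl4 α x) := rfl

lemma e_mem (i : Fin 4) : eVec 4 i ∈ f4Φ :=
  Or.inl (Or.inr ⟨i, Or.inl rfl⟩)

lemma st_mem {i j : Fin 4} (hij : i ≠ j) {s t : ℚ} (hs : s = 1 ∨ s = -1)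
    (ht : t = 1 ∨ t = -1) : s • eVec 4 i + t • eVec 4 j ∈ f4Φ :=
  Or.inl (Or.inl ⟨i, j, hij, s, t, hs, ht, rfl⟩)

lemma half_mem {ε : Fin 4 → ℚ} (hε : ∀ k, ε k = 1 ∨ ε k = -1) :
    (fun k => ε k / 2) ∈ f4Φ := by
  refine Or.inr fun i => ?_
  rcases hε i with h | h <;> simp only [] <;> rw [h] <;> [left; right] <;> norm_num

lemma ratio {a b : ℚ} (hb : b ≠ 0) (h : a / b ∈ ({-1, 0, 1} : Set ℚ)) :
    a = -b ∨ a = 0 ∨ a = b := by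
  simp only [Set.mem_insert_iff, Set.mem_singleton_iff] at h
  rcases h with h | h | h
  · left; field_simp at h; linarith
  · right; left; exact (div_eq_zero_iff.mp h).resolve_right hb
  · right; right; field_simp at h; linarith


lemma eVec_same (i : Fin 4) : eVec 4 i i = 1 := Pi.single_eq_same i 1

lemma eVec_ne {i l : Fin 4} (h : l ≠ i) : eVec 4 i l = 0 := Pi.single_eq_of_ne h 1

lemma h2_e (i : Fin 4) : stdCoroot 4 (eVec 4 i) (eVec 4 i) = 2 := by
  rw [coroot_e, eVec_same]; norm_num

lemma h2_st {i j : Fin 4} (hij : i ≠ j) {s t : ℚ} (hs : s = 1 ∨ s = -1)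
    (ht : t = 1 ∨ t = -1) :
    stdCoroot 4 (s • eVec 4 i + t • eVec 4 j) (s • eVec 4 i + t • eVec 4 j) = 2 := by
  rw [coroot_st hij s t hs ht]
  simp only [Pi.add_apply, Pi.smul_apply, smul_eq_mul, eVec_same,
    eVec_ne hij, eVec_ne hij.symm]
  rcases hs with h | h <;> rcases ht with h' | h' <;> rw [h, h'] <;> norm_num

lemma h2_half {ε : Fin 4 → ℚ} (hε : ∀ k, ε k = 1 ∨ ε k = -1) :
    stdCoroot 4 (fun k => ε k / 2) (fun k => ε k / 2) = 2 := by
  rw [coroot_half ε hε]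
  have : ∀ k : Fin 4, ε k * (ε k / 2) = 1/2 := by
    intro k; rcases hε k with h | h <;> rw [h] <;> norm_num
  simp [this]
  norm_num

end QC

/-- Lemma 3.3 of the paper. For the root system of type `F₄` in `ℚ⁴`
(with coroots `α∨ = 2α/(α,α)` via the standard inner product), no nonzero element of the
weight lattice is quasi-constant. -/
theorem statement5 (χ : Fin 4 → ℚ)
    (hχ : χ ∈ QC.weightLattice QC.f4Φ (QC.stdCoroot 4))
    (hqc : QC.IsQuasiConstant QC.f4Φ (QC.stdCoroot 4) χ) : χ = 0 := by
  classical
  open QC in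
  by_contra hne
  obtain ⟨i, hi⟩ : ∃ i, χ i ≠ 0 := by
    by_contra h; push_neg at h; exact hne (funext h)
  have hco_e : stdCoroot 4 (eVec 4 i) χ = 2 * χ i := coroot_e i χ
  have hne0 : stdCoroot 4 (eVec 4 i) χ ≠ 0 := by
    rw [hco_e]; exact mul_ne_zero two_ne_zero hi
  -- F1 : every coordinate is 0 or ±χ i
  have F1 : ∀ j, χ j = -χ i ∨ χ j = 0 ∨ χ j = χ i := by
    intro j
    by_cases hij : i = j
    · exact Or.inr (Or.inr (hij ▸ rfl))
    have hs : (1:ℚ) = 1 ∨ (1:ℚ) = -1 := Or.inl rfl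
    have ht : (-1:ℚ) = 1 ∨ (-1:ℚ) = -1 := Or.inr rfl
    have h2 := h2_st hij hs ht
    have key := hqc _ (e_mem i) hne0 (rflE _ h2) (rflE_mem h2 (st_mem hij hs ht))
    rw [coact_rflE, coroot_e, coroot_e] at key
    have hc : rfl4 ((1:ℚ) • eVec 4 i + (-1:ℚ) • eVec 4 j) χ i = χ j := by
      rw [rfl4_coord, coroot_st hij _ _ hs ht]
      simp only [Pi.add_apply, Pi.smul_apply, smul_eq_mul, eVec_same,
        eVec_ne (Ne.symm hij), eVec_ne hij]
      ring
    rw [hc] at key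
    rcases ratio (mul_ne_zero two_ne_zero hi) key with h | h | h
    · left; linarith
    · right; left; linarith
    · right; right; linarith
  by_cases hall : ∀ k, χ k ≠ 0
  · -- Case C : all coordinates nonzero, all equal to ±χ i
    set ε : Fin 4 → ℚ := fun k => χ k / χ i with hεdef
    have hε : ∀ k, ε k = 1 ∨ ε k = -1 := by
      intro k
      rcases F1 k with h | h | h
      · right; rw [hεdef]; field_simp [h]; exact h
      · exact absurd h (hall k)
      · left; rw [hεdef]; field_simp [h]; exact h
    have hεχ : ∀ k, ε k * χ k = χ i := by
      intro k
      rcases F1 k with h | h | h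
      · rw [hεdef]; field_simp [h]; rw [h]; ring
      · exact absurd h (hall k)
      · rw [hεdef]; field_simp [h]; rw [h]
    have hεi : ε i = 1 := by rw [hεdef]; field_simp
    have hsum : (∑ k, ε k * χ k) = 4 * χ i := by
      rw [Finset.sum_congr rfl (fun k _ => hεχ k)]
      simp

    have hco : stdCoroot 4 (fun k => ε k / 2) χ = 4 * χ i := by
      rw [coroot_half ε hε, hsum]
    have hne4 : stdCoroot 4 (fun k => ε k / 2) χ ≠ 0 := by
      rw [hco]; exact mul_ne_zero four_ne_zero hi
    have key := hqc _ (half_mem hε) hne4 (rflE _ (h2_e i)) (rflE_mem (h2_e i) (e_mem i))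
    rw [coact_rflE, coroot_half ε hε, coroot_half ε hε, hsum] at key
    have hnum : (∑ k, ε k * rfl4 (eVec 4 i) χ k) = 2 * χ i := by
      have hterm : ∀ k : Fin 4, ε k * rfl4 (eVec 4 i) χ k
          = χ i - (if k = i then 2 * χ i else 0) := by
        intro k
        rw [rfl4_coord, coroot_e]
        by_cases hk : k = i
        · subst hk; rw [eVec_same, if_pos rfl, mul_sub, hεχ k, hεi]; ring
        · rw [eVec_ne hk, if_neg hk, mul_zero, sub_zero, sub_zero]; exact hεχ k
      rw [Finset.sum_congr rfl (fun k _ => hterm k), Finset.sum_sub_distrib,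
        Finset.sum_ite_eq' Finset.univ i (fun _ => 2 * χ i)]
      simp; ring
    rw [hnum] at key
    rcases ratio (mul_ne_zero four_ne_zero hi) key with h | h | h <;> [skip; skip; skip] <;>
      exact hi (by linarith)
  · push_neg at hall
    obtain ⟨k, hk⟩ := hall
    have hki : k ≠ i := fun h => hi (h ▸ hk)
    by_cases hj : ∃ j, j ≠ i ∧ χ j ≠ 0
    · -- Case B : another nonzero coordinate j and a zero coordinate k
      obtain ⟨j, hji, hj0⟩ := hj
      have hkj : k ≠ j := fun h => hj0 (h ▸ hk)
      have hik : i ≠ k := hki.symm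
      set t : ℚ := -χ i / χ j with htdef
      have ht : t = 1 ∨ t = -1 := by
        rcases F1 j with h | h | h
        · left; rw [htdef, h]; field_simp
        · exact absurd h hj0
        · right; rw [htdef, h]; field_simp
      have htj : t * χ j = -χ i := by rw [htdef]; field_simp
      have hone : (1:ℚ) = 1 ∨ (1:ℚ) = -1 := Or.inl rfl
      have h2α := h2_st hik hone hone
      have h2β := h2_st hkj hone ht
      have hcoα : stdCoroot 4 ((1:ℚ) • eVec 4 i + (1:ℚ) • eVec 4 k) χ = χ i := by
        rw [coroot_st hik 1 1 hone hone, hk]; ring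
      have hcoβ : stdCoroot 4 ((1:ℚ) • eVec 4 k + t • eVec 4 j) χ = -χ i := by
        rw [coroot_st hkj 1 t hone ht, hk, htj]; ring
      have hneα : stdCoroot 4 ((1:ℚ) • eVec 4 i + (1:ℚ) • eVec 4 k) χ ≠ 0 := by
        rw [hcoα]; exact hi
      have key := hqc _ (st_mem hik hone hone) hneα (rflE _ h2β)
        (rflE_mem h2β (st_mem hkj hone ht))
      rw [coact_rflE, coroot_st hik 1 1 hone hone, coroot_st hik 1 1 hone hone] at key
      have hci : rfl4 ((1:ℚ) • eVec 4 k + t • eVec 4 j) χ i = χ i := by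
        rw [rfl4_coord, hcoβ]
        simp only [Pi.add_apply, Pi.smul_apply, smul_eq_mul,
          eVec_ne hik, eVec_ne (Ne.symm hji)]
        ring
      have hck : rfl4 ((1:ℚ) • eVec 4 k + t • eVec 4 j) χ k = χ i := by
        rw [rfl4_coord, hcoβ]
        simp only [Pi.add_apply, Pi.smul_apply, smul_eq_mul, eVec_same,
          eVec_ne hkj]
        rw [hk]; ring
      rw [hci, hck, hk] at key
      have key' : (2 * χ i) / χ i ∈ ({-1, 0, 1} : Set ℚ) := by
        have e1 : (1:ℚ) * χ i + 1 * χ i = 2 * χ i := by ring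
        have e2 : (1:ℚ) * χ i + 1 * 0 = χ i := by ring
        rwa [e1, e2] at key
      rcases ratio hi key' with h | h | h <;> exact hi (by linarith)
    · -- Case A : χ i is the only nonzero coordinate
      push_neg at hj
      have hsum : (∑ l, χ l) = χ i := by
        rw [Finset.sum_eq_single i]
        · intro b _ hb; exact hj b hb
        · intro h; exact absurd (Finset.mem_univ i) h
      set ε : Fin 4 → ℚ := fun _ => 1 with hεdef
      have hε : ∀ l, ε l = 1 ∨ ε l = -1 := fun _ => Or.inl rfl
      have h2h := h2_half hε
      have key := hqc _ (e_mem i) hne0 (rflE _ h2h) (rflE_mem h2h (half_mem hε))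
      rw [coact_rflE, coroot_e, coroot_e] at key
      have hc : rfl4 (fun l => ε l / 2) χ i = χ i / 2 := by
        rw [rfl4_coord, coroot_half ε hε]
        have : (∑ l, ε l * χ l) = χ i := by
          rw [hεdef]; simpa using hsum
        rw [this]; rw [hεdef]; ring
      rw [hc] at key
      rcases ratio (mul_ne_zero two_ne_zero hi) key with h | h | h <;> exact hi (by linarith)
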